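/- Let a, b, p, q be positive real numbers and x ∈ (0,1). Then the generalized polylogarithm satisfies the Turán-type inequality Φ_{p,q}(a,b;x) · Φ_{p+2,q}(a,b;x) − Φ_{p+1,q}(a,b;x)^2 ≥ 0. -/

import Mathlib

/-!
The `k`-th term of `Φ_{p,q}(a,b;x)` is `c_k ρ_k ^ p` with `ρ_k = (1 + a) / (k + 1 + a)`, so it is
log-linear in `p`: the terms `t_k(p)` satisfy `t_k(p + 1) ^ 2 = t_k(p) t_k(p + 2)`. The Turán
inequality is then the Cauchy–Schwarz inequality for the series.
-/

/-- The generalized polylogarithm with real parameters. -/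
noncomputable def genPolylogR (p q a b x : ℝ) : ℝ :=
  ∑' k : ℕ, ((1 + a) ^ p * (1 + b) ^ q /
      (((k : ℝ) + 1 + a) ^ p * ((k : ℝ) + 1 + b) ^ q)) * x ^ (k + 1)

theorem tsum_sq_le_tsum_mul_tsum_of_sq_le_mul {ι : Type*} {r f g : ι → ℝ}
    (hf : Summable f) (hg : Summable g) (hf0 : ∀ i, 0 ≤ f i) (hg0 : ∀ i, 0 ≤ g i)
    (hrfg : ∀ i, r i ^ 2 ≤ f i * g i) :
    (∑' i, r i) ^ 2 ≤ (∑' i, f i) * ∑' i, g i := by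
  have hr : Summable r := by
    refine Summable.of_norm_bounded ((hf.add hg).div_const 2) fun i => ?_
    rw [Real.norm_eq_abs, le_div_iff₀ two_pos, ← abs_two, ← abs_mul, abs_le]
    constructor <;> nlinarith [hrfg i, hf0 i, hg0 i, sq_nonneg (f i - g i)]
  exact le_of_tendsto_of_tendsto' (hr.hasSum.pow 2) (Filter.Tendsto.mul hf.hasSum hg.hasSum)
    fun s => Finset.sum_sq_le_sum_mul_sum_of_sq_le_mul s (fun i _ => hf0 i) (fun i _ => hg0 i)
      fun i _ => hrfg i

noncomputable def genPolylogTerm (p q a b x : ℝ) (k : ℕ) : ℝ :=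
  ((1 + a) ^ p * (1 + b) ^ q /
      (((k : ℝ) + 1 + a) ^ p * ((k : ℝ) + 1 + b) ^ q)) * x ^ (k + 1)

theorem genPolylogR_eq_tsum (p q a b x : ℝ) :
    genPolylogR p q a b x = ∑' k, genPolylogTerm p q a b x k := rfl

section Term

variable {p q a b x : ℝ} (k : ℕ)

theorem genPolylogTerm_nonneg (ha : -1 < a) (hb : -1 < b) (hx : 0 ≤ x) :
    0 ≤ genPolylogTerm p q a b x k := by
  have hk : (0 : ℝ) ≤ k := k.cast_nonneg
  have hnum : 0 ≤ (1 + a) ^ p * (1 + b) ^ q :=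
    mul_nonneg (Real.rpow_nonneg (by linarith) p) (Real.rpow_nonneg (by linarith) q)
  have hden : 0 ≤ ((k : ℝ) + 1 + a) ^ p * ((k : ℝ) + 1 + b) ^ q :=
    mul_nonneg (Real.rpow_nonneg (by linarith) p) (Real.rpow_nonneg (by linarith) q)
  exact mul_nonneg (div_nonneg hnum hden) (pow_nonneg hx _)

theorem genPolylogTerm_le_pow (ha : -1 < a) (hb : -1 < b) (hp : 0 ≤ p) (hq : 0 ≤ q)
    (hx : 0 ≤ x) : genPolylogTerm p q a b x k ≤ x ^ (k + 1) := by
  have hk : (0 : ℝ) ≤ k := k.cast_nonneg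
  have hA : (1 + a) ^ p ≤ ((k : ℝ) + 1 + a) ^ p :=
    Real.rpow_le_rpow (by linarith) (by linarith) hp
  have hB : (1 + b) ^ q ≤ ((k : ℝ) + 1 + b) ^ q :=
    Real.rpow_le_rpow (by linarith) (by linarith) hq
  have hcoeff :
      (1 + a) ^ p * (1 + b) ^ q / (((k : ℝ) + 1 + a) ^ p * ((k : ℝ) + 1 + b) ^ q) ≤ 1 :=
    div_le_one_of_le₀ (mul_le_mul hA hB (Real.rpow_nonneg (by linarith) q)
      ((Real.rpow_nonneg (by linarith) p).trans hA))
      (mul_nonneg (Real.rpow_nonneg (by linarith) p) (Real.rpow_nonneg (by linarith) q))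
  exact mul_le_of_le_one_left (pow_nonneg hx _) hcoeff

theorem summable_genPolylogTerm (ha : -1 < a) (hb : -1 < b) (hp : 0 ≤ p) (hq : 0 ≤ q)
    (hx₀ : 0 ≤ x) (hx₁ : x < 1) : Summable (genPolylogTerm p q a b x) :=
  Summable.of_nonneg_of_le (genPolylogTerm_nonneg · ha hb hx₀)
    (genPolylogTerm_le_pow · ha hb hp hq hx₀)
    ((summable_geometric_of_lt_one hx₀ hx₁).mul_left x |>.congr fun k => (pow_succ' x k).symm)

theorem genPolylogTerm_add_one (ha : -1 < a) :
    genPolylogTerm (p + 1) q a b x k = genPolylogTerm p q a b x k * ((1 + a) / (k + 1 + a)) := by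
  have h1a : 0 < 1 + a := by linarith
  have hka : 0 < (k : ℝ) + 1 + a := by linarith [k.cast_nonneg (α := ℝ)]
  have hkap : 0 < ((k : ℝ) + 1 + a) ^ p := Real.rpow_pos_of_pos hka p
  unfold genPolylogTerm
  rw [Real.rpow_add_one h1a.ne', Real.rpow_add_one hka.ne']
  field_simp

theorem genPolylogTerm_add_one_sq (ha : -1 < a) :
    genPolylogTerm (p + 1) q a b x k ^ 2 =
      genPolylogTerm p q a b x k * genPolylogTerm (p + 2) q a b x k := by
  rw [show p + 2 = p + 1 + 1 by ring, genPolylogTerm_add_one k ha, genPolylogTerm_add_one k ha,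
    genPolylogTerm_add_one k ha]
  ring

end Term

theorem generalized_polylog_turan_p
    (a b p q : ℝ) (ha : 0 < a) (hb : 0 < b) (hp : 0 < p) (hq : 0 < q)
    (x : ℝ) (hx : x ∈ Set.Ioo (0 : ℝ) 1) :
    0 ≤ genPolylogR p q a b x * genPolylogR (p + 2) q a b x -
          (genPolylogR (p + 1) q a b x) ^ 2 := by
  obtain ⟨hx₀, hx₁⟩ := hx
  have ha' : -1 < a := by linarith
  have hb' : -1 < b := by linarith
  have hturan := tsum_sq_le_tsum_mul_tsum_of_sq_le_mul
    (summable_genPolylogTerm ha' hb' hp.le hq.le hx₀.le hx₁)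
    (summable_genPolylogTerm ha' hb' (by linarith) hq.le hx₀.le hx₁)
    (genPolylogTerm_nonneg · ha' hb' hx₀.le) (genPolylogTerm_nonneg · ha' hb' hx₀.le)
    (fun k => (genPolylogTerm_add_one_sq k ha').le)
  simp only [genPolylogR_eq_tsum]
  linarith
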